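/- Let f : ℝ → ℝ be nonnegative and measurable, and suppose f is nonincreasing on [c, ∞) for some c ∈ ℝ. Then for every t > 0 and every x > c, the convolution satisfies f∗Θ_t(x) ≥ (f(x)/√π) · ∫_0^{(x−c)/(2√t)} e^{−y²} dy. -/

import Mathlib

open MeasureTheory Real Set
open scoped ENNReal

/-!
On `(0, x - c]` the shifted point `x - y` stays in `[c, x]`, where `f (x - y) ≥ f x` by
monotonicity; discarding the rest of the line therefore bounds the convolution below by
`f x` times the heat-kernel mass of `(0, x - c]`, and the substitution `y = 2 √t u` turns that
mass into `(1/√π) ∫₀^{(x-c)/(2√t)} e^{-u²} du`.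
-/

/-- The Gauss–Weierstrass heat kernel on the real line. -/
noncomputable def heatKernel (t x : ℝ) : ℝ :=
  Real.exp (-x ^ 2 / (4 * t)) / (2 * Real.sqrt (Real.pi * t))

theorem heatKernel_nonneg (t y : ℝ) : 0 ≤ heatKernel t y := by
  unfold heatKernel
  positivity

theorem continuous_heatKernel (t : ℝ) : Continuous (heatKernel t) := by
  unfold heatKernel
  fun_prop

theorem intervalIntegral_heatKernel {t : ℝ} (ht : 0 < t) (a b : ℝ) :
    ∫ y in a..b, heatKernel t y =
      (√π)⁻¹ * ∫ u in (a / (2 * √t))..(b / (2 * √t)), exp (-u ^ 2) := by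
  have hs : 2 * √t ≠ 0 := by positivity
  have hkernel : ∀ y, heatKernel t y = (2 * √t)⁻¹ * (√π)⁻¹ * exp (-(y / (2 * √t)) ^ 2) := by
    intro y
    have hsq : (y / (2 * √t)) ^ 2 = y ^ 2 / (4 * t) := by
      rw [div_pow, mul_pow, sq_sqrt ht.le]
      norm_num
    rw [heatKernel, hsq, sqrt_mul pi_pos.le, neg_div]
    field_simp
  simp_rw [hkernel, intervalIntegral.integral_const_mul]
  rw [intervalIntegral.integral_comp_div (fun u => exp (-u ^ 2)) hs, smul_eq_mul]
  field_simp

theorem ofReal_mul_intervalIntegral_le_lintegral_of_antitoneOn {f g : ℝ → ℝ} {c x : ℝ}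
    (hfx : 0 ≤ f x) (hmono : AntitoneOn f (Ici c)) (hcx : c ≤ x) (hg : ∀ y, 0 ≤ g y)
    (hgi : IntervalIntegrable g volume 0 (x - c)) :
    ENNReal.ofReal (f x * ∫ y in (0)..(x - c), g y) ≤
      ∫⁻ y, ENNReal.ofReal (f (x - y) * g y) := by
  have hint : IntegrableOn (fun y => f x * g y) (Ioc 0 (x - c)) :=
    ((intervalIntegrable_iff_integrableOn_Ioc_of_le (sub_nonneg.2 hcx)).1 hgi).const_mul _
  calc ENNReal.ofReal (f x * ∫ y in (0)..(x - c), g y)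
      = ∫⁻ y in Ioc 0 (x - c), ENNReal.ofReal (f x * g y) := by
        rw [intervalIntegral.integral_of_le (sub_nonneg.2 hcx), ← integral_const_mul]
        exact ofReal_integral_eq_lintegral_ofReal hint
          (ae_of_all _ fun y => mul_nonneg hfx (hg y))
    _ ≤ ∫⁻ y in Ioc 0 (x - c), ENNReal.ofReal (f (x - y) * g y) := by
        refine setLIntegral_mono' measurableSet_Ioc fun y hy => ?_
        refine ENNReal.ofReal_le_ofReal (mul_le_mul_of_nonneg_right ?_ (hg y))
        exact hmono (mem_Ici.2 (by linarith [hy.2])) (mem_Ici.2 hcx) (by linarith [hy.1])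
    _ ≤ ∫⁻ y, ENNReal.ofReal (f (x - y) * g y) := setLIntegral_le_lintegral _ _

theorem convolution_heatKernel_lower_bound_general (f : ℝ → ℝ)
    (hf0 : ∀ x, 0 ≤ f x) (c : ℝ) (hmono : AntitoneOn f (Ici c))
    (t : ℝ) (ht : 0 < t) (x : ℝ) (hx : c < x) :
    ENNReal.ofReal
        ((f x / Real.sqrt Real.pi) * ∫ y in (0)..((x - c) / (2 * Real.sqrt t)),
          Real.exp (-y ^ 2)) ≤
      ∫⁻ y : ℝ, ENNReal.ofReal (f (x - y) * heatKernel t y) := by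
  have hmass : (f x / √π) * ∫ u in (0)..((x - c) / (2 * √t)), exp (-u ^ 2) =
      f x * ∫ y in (0)..(x - c), heatKernel t y := by
    rw [intervalIntegral_heatKernel ht, zero_div]
    ring
  rw [hmass]
  exact ofReal_mul_intervalIntegral_le_lintegral_of_antitoneOn (hf0 x) hmono hx.le
    (heatKernel_nonneg t) ((continuous_heatKernel t).intervalIntegrable _ _)

theorem convolution_heatKernel_lower_bound (f : ℝ → ℝ) (hf : Measurable f)
    (hf0 : ∀ x, 0 ≤ f x) (c : ℝ) (hmono : AntitoneOn f (Ici c))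
    (t : ℝ) (ht : 0 < t) (x : ℝ) (hx : c < x) :
    ENNReal.ofReal
        ((f x / Real.sqrt Real.pi) * ∫ y in (0)..((x - c) / (2 * Real.sqrt t)),
          Real.exp (-y ^ 2)) ≤
      ∫⁻ y : ℝ, ENNReal.ofReal (f (x - y) * heatKernel t y) :=
  convolution_heatKernel_lower_bound_general f hf0 c hmono t ht x hx
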